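/- arXiv:2003.00669 — 2 statements merged into one kernel-verified Lean document; each statement's English description precedes it below -/
import Mathlib

section
/- If a gap function g : ℕ → ℕ is padding stable (i.e., g(2^n + n) < 2^{g(n)} + g(n) for all n > 1) and T ∈ TALLY(d(n), g(n)), then Pad(T) = {1^{2^n+n} : 1^n ∈ T} is also in TALLY(d(n), g(n)). -/
/-- A tally set (viewed as a set of lengths) is in `TALLY(d, g)` if it has at most
`d(n)` elements `≤ n` and consecutive elements `n < m` satisfy `g(n) < m`. -/
def InTALLY (d g : ℕ → ℕ) (T : Set ℕ) : Prop :=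
  (∀ n, (T ∩ Set.Iic n).ncard ≤ d n) ∧ ∀ n ∈ T, ∀ m ∈ T, n < m → g n < m

lemma Set.ncard_image_inter_Iic_le {f : ℕ → ℕ} (hf : ∀ m, m ≤ f m) (T : Set ℕ) (n : ℕ) :
    (f '' T ∩ Set.Iic n).ncard ≤ (T ∩ Set.Iic n).ncard := by
  have hfin : (T ∩ Set.Iic n).Finite := (Set.finite_Iic n).subset Set.inter_subset_right
  have hsub : f '' T ∩ Set.Iic n ⊆ f '' (T ∩ Set.Iic n) := by
    rintro _ ⟨⟨m, hm, rfl⟩, hmn⟩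
    exact ⟨m, ⟨hm, (hf m).trans hmn⟩, rfl⟩
  calc (f '' T ∩ Set.Iic n).ncard
      ≤ (f '' (T ∩ Set.Iic n)).ncard := Set.ncard_le_ncard hsub (hfin.image f)
    _ ≤ (T ∩ Set.Iic n).ncard := Set.ncard_image_le hfin

theorem InTALLY.image {d g f : ℕ → ℕ} {T : Set ℕ} (hT : InTALLY d g T) (hf : StrictMono f)
    (hf_le : ∀ m, m ≤ f m) (hgap : ∀ n ∈ T, g (f n) < f (g n)) : InTALLY d g (f '' T) := by
  obtain ⟨hcard, hsep⟩ := hT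
  refine ⟨fun n => (Set.ncard_image_inter_Iic_le hf_le T n).trans (hcard n), ?_⟩
  rintro _ ⟨a, ha, rfl⟩ _ ⟨b, hb, rfl⟩ hab
  calc g (f a) < f (g a) := hgap a ha
    _ < f b := hf (hsep a ha b hb (hf.lt_iff_lt.mp hab))

def pad (n : ℕ) : ℕ := 2 ^ n + n

lemma pad_strictMono : StrictMono pad := fun _ _ hab =>
  Nat.add_lt_add (Nat.pow_lt_pow_right one_lt_two hab) hab

lemma le_pad (n : ℕ) : n ≤ pad n := Nat.le_add_left n _

theorem stmt5_general (d g : ℕ → ℕ)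
    (hstable : ∀ n : ℕ, 1 < n → g (2 ^ n + n) < 2 ^ (g n) + g n)
    (T : Set ℕ) (hT1 : ∀ n ∈ T, 1 < n) (hT : InTALLY d g T) :
    InTALLY d g ((fun n => 2 ^ n + n) '' T) :=
  hT.image pad_strictMono le_pad fun n hn => hstable n (hT1 n hn)

/-- If the gap function `g` is padding stable, i.e. `g(2^n + n) < 2^{g(n)} + g(n)` for
all `n > 1`, and `T ∈ TALLY(d, g)` (with all elements of `T` greater than `1`), then
`Pad(T) = {2^n + n : n ∈ T}` is also in `TALLY(d, g)`. -/
theorem stmt5 (d g : ℕ → ℕ) (hd : Monotone d) (hg : Monotone g)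
    (hstable : ∀ n : ℕ, 1 < n → g (2 ^ n + n) < 2 ^ (g n) + g n)
    (T : Set ℕ) (hT1 : ∀ n ∈ T, 1 < n) (hT : InTALLY d g T) :
    InTALLY d g ((fun n => 2 ^ n + n) '' T) :=
  stmt5_general d g hstable T hT1 hT
end

section
/- Let d, g : ℕ → ℕ be nondecreasing unbounded functions. Then there exists a strictly increasing unbounded function f : ℕ → ℕ such that every set S ⊆ ℕ contained in the range of f satisfies: |S ∩ {0,…,n}| ≤ d(n) for all n in the range of applicability (specifically for all n ≥ min of S when d takes positive values there), and for any n < m both in S, g(n) < m. In particular TALLY[f] ⊆ TALLY(d, g). -/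
open Filter

/-! Choose the values of `f` so that `k < d (f k)` and `g (f k) < f (k + 1)`. The first
condition puts every value `f k ≤ n` at an index `k < d n`, so at most `d n` values of `f`
lie below `n`; the second, with monotonicity of `f`, gives `g (f k) < f j` for all `k < j`. -/

theorem Set.ncard_inter_Iic_le_of_subset_range {d f : ℕ → ℕ} (hd : Monotone d)
    (hdf : ∀ k, k < d (f k)) {S : Set ℕ} (hS : S ⊆ Set.range f) (n : ℕ) :
    (S ∩ Set.Iic n).ncard ≤ d n := by
  have hsub : S ∩ Set.Iic n ⊆ f '' Set.Iio (d n) := by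
    rintro _ ⟨hxS, hxn⟩
    obtain ⟨k, rfl⟩ := hS hxS
    exact ⟨k, (hdf k).trans_le (hd hxn), rfl⟩
  calc (S ∩ Set.Iic n).ncard ≤ (f '' Set.Iio (d n)).ncard :=
        Set.ncard_le_ncard hsub ((Set.finite_Iio _).image f)
    _ ≤ (Set.Iio (d n)).ncard := Set.ncard_image_le (Set.finite_Iio _)
    _ = d n := by rw [← Finset.coe_Iio, Set.ncard_coe_finset, Nat.card_Iio]

theorem Monotone.lt_of_mem_range_of_lt {f g : ℕ → ℕ} (hf : Monotone f)
    (hgf : ∀ k, g (f k) < f (k + 1)) {n m : ℕ} (hn : n ∈ Set.range f)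
    (hm : m ∈ Set.range f) (hnm : n < m) : g n < m := by
  obtain ⟨k, rfl⟩ := hn
  obtain ⟨j, rfl⟩ := hm
  have hkj : k + 1 ≤ j := hf.reflect_lt hnm
  exact (hgf k).trans_le (hf hkj)

theorem exists_strictMono_le_and_lt_apply_succ (N g : ℕ → ℕ) :
    ∃ f : ℕ → ℕ, StrictMono f ∧ (∀ k, N k ≤ f k) ∧ ∀ k, g (f k) < f (k + 1) := by
  let f : ℕ → ℕ := fun k =>
    Nat.rec (N 0) (fun k fk => max (N (k + 1)) (max (g fk) fk + 1)) k
  have hsucc : ∀ k, f (k + 1) = max (N (k + 1)) (max (g (f k)) (f k) + 1) := fun _ => rfl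
  refine ⟨f, strictMono_nat_of_lt_succ fun k => ?_, fun k => ?_, fun k => ?_⟩
  · rw [hsucc]; omega
  · cases k with
    | zero => exact le_rfl
    | succ k => rw [hsucc]; exact le_max_left _ _
  · rw [hsucc]; omega

theorem stmt9_general (d g : ℕ → ℕ) (hd : Monotone d)
    (hdu : Tendsto d atTop atTop) :
    ∃ f : ℕ → ℕ, StrictMono f ∧ Tendsto f atTop atTop ∧
      ∀ S : Set ℕ, S ⊆ Set.range f →
        (∀ n, (S ∩ Set.Iic n).ncard ≤ d n) ∧
        (∀ n ∈ S, ∀ m ∈ S, n < m → g n < m) := by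
  choose N hN using fun k => (hdu.eventually_gt_atTop k).exists
  obtain ⟨f, hf, hNf, hgf⟩ := exists_strictMono_le_and_lt_apply_succ N g
  have hdf : ∀ k, k < d (f k) := fun k => (hN k).trans_le (hd (hNf k))
  refine ⟨f, hf, hf.tendsto_atTop, fun S hS => ⟨?_, ?_⟩⟩
  · exact Set.ncard_inter_Iic_le_of_subset_range hd hdf hS
  · exact fun n hn m hm => hf.monotone.lt_of_mem_range_of_lt hgf (hS hn) (hS hm)

/-- Given nondecreasing unbounded `d, g : ℕ → ℕ`, there is a strictly increasing
unbounded `f : ℕ → ℕ` such that every `S ⊆ range f` satisfies the `TALLY(d, g)`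
conditions: `|S ∩ {0,…,n}| ≤ d(n)` for all `n`, and `g(n) < m` whenever
`n, m ∈ S` with `n < m`.  In particular `TALLY[f] ⊆ TALLY(d, g)`. -/
theorem stmt9 (d g : ℕ → ℕ) (hd : Monotone d) (hg : Monotone g)
    (hdu : Tendsto d atTop atTop) (hgu : Tendsto g atTop atTop) :
    ∃ f : ℕ → ℕ, StrictMono f ∧ Tendsto f atTop atTop ∧
      ∀ S : Set ℕ, S ⊆ Set.range f →
        (∀ n, (S ∩ Set.Iic n).ncard ≤ d n) ∧
        (∀ n ∈ S, ∀ m ∈ S, n < m → g n < m) :=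
  stmt9_general d g hd hdu
end
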